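/- (Time monotonicity of mass functions under stationarily supersolution data.) Let d ≥ 5 be an integer and T > 0. Let M, W : [0,∞)×[0,T) → ℝ be continuous, continuously differentiable on [0,∞)×(0,T), twice continuously differentiable in r on (0,∞)×(0,T), bounded on [0,∞)×[0,T₀] for every T₀ < T, satisfying r·∂_r M + d·M ≥ 0 on (0,∞)×(0,T) with sup_{(r,t)∈(0,∞)×(0,T₀)} |r·∂_r M(r,t)| < ∞ for every T₀ < T, and solving on (0,∞)×(0,T) the system ∂_t M = ∂_{rr} M + ((d+1)/r)∂_r M + r·(∂_r M)·W + d·M·W, ∂_t W = ∂_{rr} W + ((d+1)/r)∂_r W + M. Suppose M₀ := M(·,0) and W₀ := W(·,0) are twice continuously differentiable on (0,∞) and satisfy, for all r > 0, M₀''(r) + ((d+1)/r)M₀'(r) + r·M₀'(r)·W₀(r) + d·M₀(r)·W₀(r) ≤ 0 and W₀''(r) + ((d+1)/r)W₀'(r) + M₀(r) ≤ 0. Then for each fixed r ≥ 0 the maps t ↦ M(r,t) and t ↦ W(r,t) are nonincreasing on [0,T). -/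

import Mathlib

/-- Partial derivative in the time variable. -/
noncomputable def pderivT (f : ℝ → ℝ → ℝ) (r t : ℝ) : ℝ := deriv (fun s => f r s) t

/-- Partial derivative in the radial variable. -/
noncomputable def pderivR (f : ℝ → ℝ → ℝ) (r t : ℝ) : ℝ := deriv (fun ρ => f ρ t) r

/-- Second partial derivative in the radial variable. -/
noncomputable def pderivRR (f : ℝ → ℝ → ℝ) (r t : ℝ) : ℝ := deriv (fun ρ => pderivR f ρ t) r

/-- Regularity for the mass functions: continuous on `[0,∞) × [0,T)`, continuously
differentiable on `[0,∞) × (0,T)`, twice continuously differentiable in `r` on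
`(0,∞) × (0,T)`, and bounded on `[0,∞) × [0,T₀]` for every `T₀ < T`. -/
def MassReg (f : ℝ → ℝ → ℝ) (T : ℝ) : Prop :=
  ContinuousOn (fun p : ℝ × ℝ => f p.1 p.2) (Set.Ici 0 ×ˢ Set.Ico 0 T) ∧
  (∀ r ∈ Set.Ici (0 : ℝ), ∀ t ∈ Set.Ioo (0 : ℝ) T, DifferentiableAt ℝ (fun s => f r s) t) ∧
  (∀ r ∈ Set.Ici (0 : ℝ), ∀ t ∈ Set.Ioo (0 : ℝ) T, DifferentiableAt ℝ (fun ρ => f ρ t) r) ∧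
  ContinuousOn (fun p : ℝ × ℝ => pderivT f p.1 p.2) (Set.Ici 0 ×ˢ Set.Ioo 0 T) ∧
  ContinuousOn (fun p : ℝ × ℝ => pderivR f p.1 p.2) (Set.Ici 0 ×ˢ Set.Ioo 0 T) ∧
  (∀ r ∈ Set.Ioi (0 : ℝ), ∀ t ∈ Set.Ioo (0 : ℝ) T,
    DifferentiableAt ℝ (fun ρ => pderivR f ρ t) r) ∧
  ContinuousOn (fun p : ℝ × ℝ => pderivRR f p.1 p.2) (Set.Ioi 0 ×ˢ Set.Ioo 0 T) ∧
  (∀ T₀ < T, ∃ Cb : ℝ, ∀ r ∈ Set.Ici (0 : ℝ), ∀ t ∈ Set.Icc 0 T₀, |f r t| ≤ Cb)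


/-!
For `h ≥ 0` the differences `M(r, t + h) - M₁(r, t)`, `W(r, t + h) - W₁(r, t)` between a time
translate of the solution and a supersolution `(M₁, W₁)` satisfy a cooperative linear system of
parabolic differential inequalities: the reaction `(r M_r + d M) W` is monotone in `W` because
the flux `r M_r + d M` is nonnegative. A maximum principle for this system, proved by letting
`max (A, B)` first touch the barrier `ε e^{λt} (1 + r² + 1/r)`, keeps the differences nonpositive
when they are so at `t = 0`. With the stationary supersolution `(M₀, W₀)` this gives
`(M, W)(·, h) ≤ (M₀, W₀)`; that is the initial ordering for comparing `(M, W)(·, · + h)` with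
`(M, W)` itself, which is the monotonicity in time. Continuity extends it to `r = 0`.
-/

open Set Filter Topology

-- If `c > 0`, the second derivative test makes `x` a local minimum as well, so `f` is locally
-- constant and `c = 0`.
theorem IsLocalMax.hasDerivAt_hasDerivAt_nonpos {f f' : ℝ → ℝ} {x c : ℝ} (h : IsLocalMax f x)
    (hf : ∀ᶠ y in 𝓝 x, HasDerivAt f (f' y) y) (hf' : HasDerivAt f' c x) : c ≤ 0 := by
  have hderiv : deriv f =ᶠ[𝓝 x] f' := hf.mono fun y hy => hy.deriv
  by_contra! hc
  have hmin : IsLocalMin f x := isLocalMin_of_deriv_deriv_pos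
    (by rwa [hderiv.deriv_eq, hf'.deriv])
    (by rw [hderiv.eq_of_nhds]; exact h.hasDerivAt_eq_zero hf.self_of_nhds)
    hf.self_of_nhds.continuousAt
  have hconst : f =ᶠ[𝓝 x] fun _ => f x := by
    filter_upwards [h, hmin] with y hmax hmin using le_antisymm hmax hmin
  have : deriv (deriv f) x = 0 := by
    rw [hconst.deriv.deriv_eq]; simp
  rw [hderiv.deriv_eq, hf'.deriv] at this
  exact hc.ne' this

theorem HasDerivAt.nonneg_of_le_left {g : ℝ → ℝ} {c t : ℝ} (hg : HasDerivAt g c t)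
    (hle : ∀ᶠ s in 𝓝[<] t, g s ≤ g t) : 0 ≤ c := by
  refine ge_of_tendsto (x := 𝓝[<] t) ((hasDerivAt_iff_tendsto_slope.1 hg).mono_left
    (nhdsWithin_mono _ fun s hs => ne_of_lt hs)) ?_
  filter_upwards [hle, self_mem_nhdsWithin] with s hs hst
  rw [slope_def_field]
  exact div_nonneg_of_nonpos (sub_nonpos.2 hs) (sub_nonpos.2 (le_of_lt hst))

-- `1 + r²` dominates bounded functions as `r → ∞` and `1 / r` as `r → 0`; for `a ≥ 2` the
-- radial operator `∂_rr + (a / r) ∂_r` maps the latter to `-(a - 2) / r³ ≤ 0`.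
noncomputable def profile (r : ℝ) : ℝ := 1 + r ^ 2 + r⁻¹

theorem hasDerivAt_profile {r : ℝ} (hr : r ≠ 0) :
    HasDerivAt profile (2 * r - (r ^ 2)⁻¹) r :=
  (((hasDerivAt_pow 2 r).const_add 1).add (hasDerivAt_inv hr)).congr_deriv (by simp; ring)

theorem hasDerivAt_profile_deriv {r : ℝ} (hr : r ≠ 0) :
    HasDerivAt (fun ρ => 2 * ρ - (ρ ^ 2)⁻¹) (2 + 2 * (r ^ 3)⁻¹) r :=
  (((hasDerivAt_id r).const_mul 2).sub ((hasDerivAt_pow 2 r).inv (pow_ne_zero 2 hr))).congr_deriv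
    (by field_simp; ring)

theorem one_le_profile {r : ℝ} (hr : 0 < r) : 1 ≤ profile r := by
  unfold profile; have := inv_pos.2 hr; nlinarith [sq_nonneg r]

theorem profile_radial_le {a K r : ℝ} (ha : 2 ≤ a) (hK : 0 ≤ K) (hr : 0 < r) :
    (2 + 2 * (r ^ 3)⁻¹) + a / r * (2 * r - (r ^ 2)⁻¹) + K * |r * (2 * r - (r ^ 2)⁻¹)|
      ≤ (2 * (a + 1) + 2 * K) * profile r := by
  have hlap : (2 + 2 * (r ^ 3)⁻¹) + a / r * (2 * r - (r ^ 2)⁻¹)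
      = 2 * (a + 1) - (a - 2) * (r ^ 3)⁻¹ := by field_simp; ring
  have hdrift : |r * (2 * r - (r ^ 2)⁻¹)| ≤ 2 * profile r := by
    have : r * (2 * r - (r ^ 2)⁻¹) = 2 * r ^ 2 - r⁻¹ := by field_simp
    rw [this, abs_le]; unfold profile
    constructor <;> nlinarith [inv_pos.2 hr]
  have h1 := one_le_profile hr
  rw [hlap]
  nlinarith [mul_nonneg (sub_nonneg.2 ha) (inv_pos.2 (pow_pos hr 3)).le]

noncomputable def barrier (lam r t : ℝ) : ℝ := Real.exp (lam * t) * profile r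

theorem barrier_pos (lam : ℝ) {r : ℝ} (hr : 0 < r) (t : ℝ) : 0 < barrier lam r t :=
  mul_pos (Real.exp_pos _) (zero_lt_one.trans_le (one_le_profile hr))

theorem profile_le_barrier {lam r t : ℝ} (hlam : 0 ≤ lam) (ht : 0 ≤ t) (hr : 0 < r) :
    profile r ≤ barrier lam r t :=
  le_mul_of_one_le_left (zero_le_one.trans (one_le_profile hr))
    (Real.one_le_exp (mul_nonneg hlam ht))

theorem continuousOn_barrier (lam T₀ : ℝ) :
    ContinuousOn (fun p : ℝ × ℝ => barrier lam p.1 p.2) (Ioi 0 ×ˢ Icc 0 T₀) := by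
  intro p hp
  have : p.1 ≠ 0 := ne_of_gt hp.1
  unfold barrier profile
  fun_prop (disch := assumption)

structure HasRadialDerivs (u ut ur urr : ℝ → ℝ → ℝ) (T₀ : ℝ) : Prop where
  time : ∀ r > 0, ∀ t ∈ Ioc 0 T₀, HasDerivAt (fun s => u r s) (ut r t) t
  radial : ∀ r > 0, ∀ t ∈ Ioc 0 T₀, HasDerivAt (fun ρ => u ρ t) (ur r t) r
  radial₂ : ∀ r > 0, ∀ t ∈ Ioc 0 T₀, HasDerivAt (fun ρ => ur ρ t) (urr r t) r

theorem HasRadialDerivs.sub {u ut ur urr v vt vr vrr : ℝ → ℝ → ℝ} {T₀ : ℝ}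
    (hu : HasRadialDerivs u ut ur urr T₀) (hv : HasRadialDerivs v vt vr vrr T₀) :
    HasRadialDerivs (fun r t => u r t - v r t) (fun r t => ut r t - vt r t)
      (fun r t => ur r t - vr r t) (fun r t => urr r t - vrr r t) T₀ where
  time r hr t ht := (hu.time r hr t ht).sub (hv.time r hr t ht)
  radial r hr t ht := (hu.radial r hr t ht).sub (hv.radial r hr t ht)
  radial₂ r hr t ht := (hu.radial₂ r hr t ht).sub (hv.radial₂ r hr t ht)

structure IsCoopSubsolution (a K : ℝ) (u ut ur urr v : ℝ → ℝ → ℝ) (T₀ : ℝ) : Prop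
    extends HasRadialDerivs u ut ur urr T₀ where
  le : ∀ r > 0, ∀ t ∈ Ioc 0 T₀,
    ut r t ≤ urr r t + a / r * ur r t + K * |r * ur r t| + K * |u r t| + K * max (v r t) 0

theorem le_of_touches_barrier {a K lam ε x t T₀ : ℝ} (ha : 2 ≤ a) (hK : 0 ≤ K) (hε : 0 < ε)
    {u ut ur urr v : ℝ → ℝ → ℝ} (hu : IsCoopSubsolution a K u ut ur urr v T₀) (hx : 0 < x)
    (ht : t ∈ Ioc 0 T₀)
    (htouch : u x t = ε * barrier lam x t) (hv : v x t ≤ ε * barrier lam x t)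
    (hspace : ∀ r > 0, u r t ≤ ε * barrier lam r t)
    (htime : ∀ s ∈ Ico 0 t, u x s ≤ ε * barrier lam x s) :
    lam ≤ 2 * (a + 1) + 4 * K := by
  set c := ε * Real.exp (lam * t) with hc
  have hc0 : 0 < c := by positivity
  have hφ : ∀ ρ, ε * barrier lam ρ t = c * profile ρ := fun ρ => by rw [barrier, hc]; ring
  have hφ0 : 0 < c * profile x := by have := one_le_profile hx; positivity
  have hmax : IsLocalMax (fun ρ => u ρ t - c * profile ρ) x := by
    filter_upwards [Ioi_mem_nhds hx] with ρ hρ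
    linarith [hspace ρ hρ, hφ ρ, hφ x]
  have hderiv : ∀ᶠ ρ in 𝓝 x, HasDerivAt (fun ρ => u ρ t - c * profile ρ)
      (ur ρ t - c * (2 * ρ - (ρ ^ 2)⁻¹)) ρ := by
    filter_upwards [Ioi_mem_nhds hx] with ρ hρ
    exact (hu.radial ρ hρ t ht).sub ((hasDerivAt_profile hρ.ne').const_mul c)
  have hur : ur x t = c * (2 * x - (x ^ 2)⁻¹) :=
    sub_eq_zero.1 (hmax.hasDerivAt_eq_zero hderiv.self_of_nhds)
  have hurr : urr x t ≤ c * (2 + 2 * (x ^ 3)⁻¹) := sub_nonpos.1 <|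
    hmax.hasDerivAt_hasDerivAt_nonpos hderiv
      ((hu.radial₂ x hx t ht).sub ((hasDerivAt_profile_deriv hx.ne').const_mul c))
  have hut : lam * (c * profile x) ≤ ut x t := by
    have hφt : HasDerivAt (fun s => ε * barrier lam x s) (lam * (c * profile x)) t := by
      have := (((hasDerivAt_id' t).const_mul lam).exp.mul_const (profile x)).const_mul ε
      exact this.congr_deriv (by rw [hc]; ring)
    have h := ((hu.time x hx t ht).sub hφt).nonneg_of_le_left <| by
      filter_upwards [Ioo_mem_nhdsLT ht.1] with s hs
      have := htime s ⟨hs.1.le, hs.2⟩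
      simp only [Pi.sub_apply]; linarith
    linarith
  have hdrift : |x * ur x t| = c * |x * (2 * x - (x ^ 2)⁻¹)| := by
    rw [hur, mul_left_comm, abs_mul, abs_of_pos hc0]
  have hprofile := mul_le_mul_of_nonneg_left (profile_radial_le ha hK hx) hc0.le
  have hvK : K * max (v x t) 0 ≤ K * (c * profile x) :=
    mul_le_mul_of_nonneg_left (max_le (hφ x ▸ hv) hφ0.le) hK
  have hrhs : ut x t ≤ (2 * (a + 1) + 4 * K) * (c * profile x) := by
    have hsub := hu.le x hx t ht
    rw [htouch, hφ, abs_of_pos hφ0, hdrift, hur] at hsub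
    nlinarith
  exact le_of_mul_le_mul_right (hut.trans hrhs) hφ0

theorem exists_first_zero {F : ℝ → ℝ → ℝ} {S : Set ℝ} {T₀ : ℝ} (hS : IsCompact S)
    (hS₀ : S ⊆ Ioi 0) (hF : ContinuousOn (fun p : ℝ × ℝ => F p.1 p.2) (Ioi 0 ×ˢ Icc 0 T₀))
    (hFS : ∀ r > 0, ∀ t ∈ Icc 0 T₀, 0 ≤ F r t → r ∈ S) (hF₀ : ∀ r > 0, F r 0 < 0)
    {r₁ t₁ : ℝ} (hr₁ : 0 < r₁) (ht₁ : t₁ ∈ Icc 0 T₀) (h₁ : 0 ≤ F r₁ t₁) :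
    ∃ x > 0, ∃ t ∈ Ioc 0 T₀, F x t = 0 ∧ (∀ r > 0, F r t ≤ 0) ∧
      ∀ s ∈ Ico 0 t, ∀ r > 0, F r s < 0 := by
  have hSI : S ×ˢ Icc 0 T₀ ⊆ Ioi 0 ×ˢ Icc 0 T₀ := prod_mono hS₀ subset_rfl
  set E := S ×ˢ Icc 0 T₀ ∩ (fun p : ℝ × ℝ => F p.1 p.2) ⁻¹' Ici 0
  have hE : IsCompact E := (hS.prod isCompact_Icc).of_isClosed_subset
    ((hF.mono hSI).preimage_isClosed_of_isClosed (hS.isClosed.prod isClosed_Icc) isClosed_Ici)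
    inter_subset_left
  obtain ⟨⟨x₀, t⟩, ⟨⟨hx₀, ht⟩, hFx₀⟩, hmin⟩ :=
    hE.exists_isMinOn ⟨(r₁, t₁), ⟨hFS r₁ hr₁ t₁ ht₁ h₁, ht₁⟩, h₁⟩ continuous_snd.continuousOn
  have hbefore : ∀ s ∈ Ico 0 t, ∀ r > 0, F r s < 0 := by
    intro s hs r hr
    by_contra! h
    have hsT : s ∈ Icc 0 T₀ := ⟨hs.1, hs.2.le.trans ht.2⟩
    exact hs.2.not_ge (hmin (a := (r, s)) ⟨⟨hFS r hr s hsT h, hsT⟩, h⟩)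
  have ht₀ : 0 < t := ht.1.lt_of_ne fun h => (hF₀ x₀ (hS₀ hx₀)).not_ge (h ▸ hFx₀)
  have hslice : ContinuousOn (fun r => F r t) S :=
    (hF.mono hSI).comp (continuous_id.prodMk continuous_const).continuousOn fun r hr => ⟨hr, ht⟩
  obtain ⟨x, hxS, hxmax⟩ := hS.exists_isMaxOn ⟨x₀, hx₀⟩ hslice
  have hx : 0 < x := hS₀ hxS
  have hFx : F x t ≤ 0 := by
    have hcont : ContinuousWithinAt (fun s => F x s) (Ico 0 t) t :=
      ((hF.comp (continuous_const.prodMk continuous_id).continuousOn fun s hs => ⟨hx, hs⟩) t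
        ht).mono fun s hs => ⟨hs.1, hs.2.le.trans ht.2⟩
    exact ContinuousWithinAt.closure_le (by simp [closure_Ico ht₀.ne, ht₀.le]) hcont
      continuousWithinAt_const fun s hs => (hbefore s hs x hx).le
  have hspace : ∀ r > 0, F r t ≤ 0 := fun r hr =>
    (le_or_gt 0 (F r t)).elim (fun h => (hxmax (hFS r hr t ht h)).trans hFx) le_of_lt
  exact ⟨x, hx, t, ⟨ht₀, ht.2⟩, le_antisymm hFx ((hFx₀.trans (hxmax hx₀))), hspace, hbefore⟩

theorem mem_Icc_of_mul_profile_le {ε C r : ℝ} (hε : 0 < ε) (hr : 0 < r)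
    (h : ε * profile r ≤ C) : r ∈ Icc (ε / C) √(C / ε) := by
  have hinv := inv_pos.2 hr
  unfold profile at h
  have hεr : ε * r⁻¹ ≤ C := by nlinarith [mul_nonneg hε.le (sq_nonneg r)]
  have hC : 0 < C := (mul_pos hε hinv).trans_le hεr
  refine ⟨?_, Real.le_sqrt_of_sq_le ((le_div_iff₀ hε).2 (by nlinarith))⟩
  rw [div_le_iff₀' hC]
  calc ε = ε * r⁻¹ * r := by field_simp
    _ ≤ C * r := by gcongr

theorem max_lt_barrier {a K lam C T₀ ε : ℝ} (ha : 2 ≤ a) (hK : 0 ≤ K)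
    (hlam : 2 * (a + 1) + 4 * K < lam) (hε : 0 < ε) {A At Ar Arr B Bt Br Brr : ℝ → ℝ → ℝ}
    (hA : IsCoopSubsolution a K A At Ar Arr B T₀) (hB : IsCoopSubsolution a K B Bt Br Brr A T₀)
    (hAc : ContinuousOn (fun p : ℝ × ℝ => A p.1 p.2) (Ioi 0 ×ˢ Icc 0 T₀))
    (hBc : ContinuousOn (fun p : ℝ × ℝ => B p.1 p.2) (Ioi 0 ×ˢ Icc 0 T₀))
    (hC : ∀ r > 0, ∀ t ∈ Icc 0 T₀, A r t ≤ C ∧ B r t ≤ C)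
    (h₀ : ∀ r > 0, A r 0 ≤ 0 ∧ B r 0 ≤ 0) :
    ∀ r > 0, ∀ t ∈ Icc 0 T₀, max (A r t) (B r t) < ε * barrier lam r t := by
  by_contra! hbad
  obtain ⟨r₁, hr₁, t₁, ht₁, h₁⟩ := hbad
  have hlam₀ : 0 ≤ lam := by linarith
  have hprofile : ∀ r > 0, ∀ t ∈ Icc 0 T₀, ε * barrier lam r t ≤ max (A r t) (B r t) →
      ε * profile r ≤ C := fun r hr t ht h =>
    (mul_le_mul_of_nonneg_left (profile_le_barrier hlam₀ ht.1 hr) hε.le).trans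
      (h.trans (max_le_iff.2 (hC r hr t ht)))
  have hC₀ : 0 < C := (mul_pos hε (zero_lt_one.trans_le (one_le_profile hr₁))).trans_le
    (hprofile r₁ hr₁ t₁ ht₁ h₁)
  obtain ⟨x, hx, t, ht, hzero, hspace, htime⟩ := exists_first_zero isCompact_Icc
    (fun r hr => div_pos hε hC₀ |>.trans_le hr.1)
    ((hAc.sup hBc).sub ((continuousOn_barrier lam T₀).const_smul ε))
    (fun r hr t ht h => mem_Icc_of_mul_profile_le hε hr (hprofile r hr t ht (sub_nonneg.1 h)))
    (fun r hr => sub_neg.2 ((max_le (h₀ r hr).1 (h₀ r hr).2).trans_lt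
      (mul_pos hε (barrier_pos lam hr 0))))
    hr₁ ht₁ (sub_nonneg.2 h₁)
  have touch : ∀ {u ut ur urr v : ℝ → ℝ → ℝ}, IsCoopSubsolution a K u ut ur urr v T₀ →
      (∀ r s, u r s ≤ max (A r s) (B r s)) → (∀ r s, v r s ≤ max (A r s) (B r s)) →
      u x t = max (A x t) (B x t) → False := by
    intro u ut ur urr v hu hu_le hv_le hux
    have := le_of_touches_barrier ha hK hε hu hx ht (by linarith) (by linarith [hv_le x t])
      (fun r hr => by linarith [hu_le r t, hspace r hr])
      (fun s hs => by linarith [hu_le x s, htime s hs x hx])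
    linarith
  rcases le_total (B x t) (A x t) with h | h
  · exact touch hA (fun _ _ => le_max_left _ _) (fun _ _ => le_max_right _ _) (max_eq_left h).symm
  · exact touch hB (fun _ _ => le_max_right _ _) (fun _ _ => le_max_left _ _) (max_eq_right h).symm

theorem nonpos_of_isCoopSubsolution {a K C T₀ : ℝ} (ha : 2 ≤ a) (hK : 0 ≤ K)
    {A At Ar Arr B Bt Br Brr : ℝ → ℝ → ℝ}
    (hA : IsCoopSubsolution a K A At Ar Arr B T₀) (hB : IsCoopSubsolution a K B Bt Br Brr A T₀)
    (hAc : ContinuousOn (fun p : ℝ × ℝ => A p.1 p.2) (Ioi 0 ×ˢ Icc 0 T₀))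
    (hBc : ContinuousOn (fun p : ℝ × ℝ => B p.1 p.2) (Ioi 0 ×ˢ Icc 0 T₀))
    (hC : ∀ r > 0, ∀ t ∈ Icc 0 T₀, A r t ≤ C ∧ B r t ≤ C)
    (h₀ : ∀ r > 0, A r 0 ≤ 0 ∧ B r 0 ≤ 0) :
    ∀ r > 0, ∀ t ∈ Icc 0 T₀, A r t ≤ 0 ∧ B r t ≤ 0 := by
  intro r hr t ht
  have hb := barrier_pos (2 * (a + 1) + 4 * K + 1) hr t
  refine max_le_iff.1 (le_of_forall_pos_lt_add fun δ hδ => ?_)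
  simpa [div_mul_cancel₀ δ hb.ne'] using max_lt_barrier ha hK (lt_add_one _)
    (div_pos hδ hb) hA hB hAc hBc hC h₀ r hr t ht

structure IsClassicalOn (u : ℝ → ℝ → ℝ) (T₀ : ℝ) : Prop where
  continuousOn : ContinuousOn (fun p : ℝ × ℝ => u p.1 p.2) (Ioi 0 ×ˢ Icc 0 T₀)
  differentiableAt_time : ∀ r > 0, ∀ t ∈ Ioc 0 T₀, DifferentiableAt ℝ (fun s => u r s) t
  differentiableAt_radial : ∀ r > 0, ∀ t ∈ Ioc 0 T₀, DifferentiableAt ℝ (fun ρ => u ρ t) r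
  differentiableAt_radial₂ : ∀ r > 0, ∀ t ∈ Ioc 0 T₀,
    DifferentiableAt ℝ (fun ρ => pderivR u ρ t) r

theorem IsClassicalOn.hasRadialDerivs {u : ℝ → ℝ → ℝ} {T₀ : ℝ} (hu : IsClassicalOn u T₀) :
    HasRadialDerivs u (pderivT u) (pderivR u) (pderivRR u) T₀ where
  time r hr t ht := (hu.differentiableAt_time r hr t ht).hasDerivAt
  radial r hr t ht := (hu.differentiableAt_radial r hr t ht).hasDerivAt
  radial₂ r hr t ht := (hu.differentiableAt_radial₂ r hr t ht).hasDerivAt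

noncomputable def massRhsM (d : ℝ) (M W : ℝ → ℝ → ℝ) (r t : ℝ) : ℝ :=
  pderivRR M r t + (d + 1) / r * pderivR M r t + r * pderivR M r t * W r t + d * M r t * W r t

noncomputable def massRhsW (d : ℝ) (M W : ℝ → ℝ → ℝ) (r t : ℝ) : ℝ :=
  pderivRR W r t + (d + 1) / r * pderivR W r t + M r t

structure IsMassSupersolution (d : ℝ) (M W : ℝ → ℝ → ℝ) (T₀ : ℝ) : Prop where
  classicalM : IsClassicalOn M T₀
  classicalW : IsClassicalOn W T₀
  rhsM_le : ∀ r > 0, ∀ t ∈ Ioc 0 T₀, massRhsM d M W r t ≤ pderivT M r t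
  rhsW_le : ∀ r > 0, ∀ t ∈ Ioc 0 T₀, massRhsW d M W r t ≤ pderivT W r t

structure IsMassSubsolution (d : ℝ) (M W : ℝ → ℝ → ℝ) (T₀ : ℝ) : Prop where
  classicalM : IsClassicalOn M T₀
  classicalW : IsClassicalOn W T₀
  le_rhsM : ∀ r > 0, ∀ t ∈ Ioc 0 T₀, pderivT M r t ≤ massRhsM d M W r t
  le_rhsW : ∀ r > 0, ∀ t ∈ Ioc 0 T₀, pderivT W r t ≤ massRhsW d M W r t

-- `p, m, w` stand for `M_r, M, W`. The reaction `(r p + d m) w` is monotone in `w` because the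
-- flux `r p₂ + d m₂` is nonnegative; the remaining differences are weighted by `w₁`.
theorem reaction_sub_le {d K r p₁ p₂ m₁ m₂ w₁ w₂ : ℝ} (hd : 1 ≤ d)
    (hq₀ : 0 ≤ r * p₂ + d * m₂) (hqK : r * p₂ + d * m₂ ≤ K) (hw : d * |w₁| ≤ K) :
    r * p₂ * w₂ + d * m₂ * w₂ - (r * p₁ * w₁ + d * m₁ * w₁)
      ≤ K * |r * (p₂ - p₁)| + K * |m₂ - m₁| + K * max (w₂ - w₁) 0 := by
  have hw' : |w₁| ≤ K := (le_mul_of_one_le_left (abs_nonneg _) hd).trans hw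
  have hq : (r * p₂ + d * m₂) * (w₂ - w₁) ≤ K * max (w₂ - w₁) 0 :=
    (mul_le_mul_of_nonneg_left (le_max_left _ _) hq₀).trans
      (mul_le_mul_of_nonneg_right hqK (le_max_right _ _))
  have hp : r * (p₂ - p₁) * w₁ ≤ K * |r * (p₂ - p₁)| := calc
    r * (p₂ - p₁) * w₁ ≤ |r * (p₂ - p₁)| * |w₁| := by rw [← abs_mul]; exact le_abs_self _
    _ ≤ K * |r * (p₂ - p₁)| := by rw [mul_comm K]; gcongr
  have hm : d * (m₂ - m₁) * w₁ ≤ K * |m₂ - m₁| := calc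
    d * (m₂ - m₁) * w₁ = d * ((m₂ - m₁) * w₁) := by ring
    _ ≤ d * |(m₂ - m₁) * w₁| := mul_le_mul_of_nonneg_left (le_abs_self _) (by linarith)
    _ = |m₂ - m₁| * (d * |w₁|) := by rw [abs_mul]; ring
    _ ≤ K * |m₂ - m₁| := by rw [mul_comm K]; gcongr
  linarith [show r * p₂ * w₂ + d * m₂ * w₂ - (r * p₁ * w₁ + d * m₁ * w₁)
    = (r * p₂ + d * m₂) * (w₂ - w₁) + r * (p₂ - p₁) * w₁ + d * (m₂ - m₁) * w₁ by ring]

theorem IsMassSubsolution.le_of_isMassSupersolution {d K C T₀ : ℝ} (hd : 1 ≤ d) (hK : 1 ≤ K)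
    {M₁ W₁ M₂ W₂ : ℝ → ℝ → ℝ} (hsub : IsMassSubsolution d M₂ W₂ T₀)
    (hsup : IsMassSupersolution d M₁ W₁ T₀)
    (hC : ∀ r > 0, ∀ t ∈ Icc 0 T₀, M₂ r t - M₁ r t ≤ C ∧ W₂ r t - W₁ r t ≤ C)
    (hflux : ∀ r > 0, ∀ t ∈ Ioc 0 T₀,
      0 ≤ r * pderivR M₂ r t + d * M₂ r t ∧ r * pderivR M₂ r t + d * M₂ r t ≤ K)
    (hW₁ : ∀ r > 0, ∀ t ∈ Ioc 0 T₀, d * |W₁ r t| ≤ K)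
    (h₀ : ∀ r > 0, M₂ r 0 ≤ M₁ r 0 ∧ W₂ r 0 ≤ W₁ r 0) :
    ∀ r > 0, ∀ t ∈ Icc 0 T₀, M₂ r t ≤ M₁ r t ∧ W₂ r t ≤ W₁ r t := by
  have hA : IsCoopSubsolution (d + 1) K (fun r t => M₂ r t - M₁ r t) _ _ _
      (fun r t => W₂ r t - W₁ r t) T₀ :=
    ⟨hsub.classicalM.hasRadialDerivs.sub hsup.classicalM.hasRadialDerivs, fun r hr t ht => by
      have h₂ := hsub.le_rhsM r hr t ht
      have h₁ := hsup.rhsM_le r hr t ht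
      have hreact := reaction_sub_le (p₁ := pderivR M₁ r t) (m₁ := M₁ r t) (w₂ := W₂ r t) hd
        (hflux r hr t ht).1 (hflux r hr t ht).2 (hW₁ r hr t ht)
      simp only [massRhsM] at h₁ h₂
      linarith [mul_sub ((d + 1) / r) (pderivR M₂ r t) (pderivR M₁ r t)]⟩
  have hB : IsCoopSubsolution (d + 1) K (fun r t => W₂ r t - W₁ r t) _ _ _
      (fun r t => M₂ r t - M₁ r t) T₀ :=
    ⟨hsub.classicalW.hasRadialDerivs.sub hsup.classicalW.hasRadialDerivs, fun r hr t ht => by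
      have h₂ := hsub.le_rhsW r hr t ht
      have h₁ := hsup.rhsW_le r hr t ht
      simp only [massRhsW] at h₁ h₂
      have hM := (le_max_left (M₂ r t - M₁ r t) 0).trans
        (le_mul_of_one_le_left (le_max_right _ _) hK)
      have hK₀ : 0 ≤ K := by linarith
      linarith [mul_sub ((d + 1) / r) (pderivR W₂ r t) (pderivR W₁ r t),
        mul_nonneg hK₀ (abs_nonneg (r * (pderivR W₂ r t - pderivR W₁ r t))),
        mul_nonneg hK₀ (abs_nonneg (W₂ r t - W₁ r t))]⟩
  have hmain := nonpos_of_isCoopSubsolution (by linarith) (by linarith) hA hB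
    (hsub.classicalM.continuousOn.sub hsup.classicalM.continuousOn)
    (hsub.classicalW.continuousOn.sub hsup.classicalW.continuousOn) hC
    (fun r hr => ⟨sub_nonpos.2 (h₀ r hr).1, sub_nonpos.2 (h₀ r hr).2⟩)
  exact fun r hr t ht => ⟨sub_nonpos.1 (hmain r hr t ht).1, sub_nonpos.1 (hmain r hr t ht).2⟩

theorem isClassicalOn_stationary {T₀ : ℝ} {u₀ : ℝ → ℝ}
    (hu₀ : ∀ r ∈ Ioi (0 : ℝ), DifferentiableAt ℝ u₀ r ∧ DifferentiableAt ℝ (deriv u₀) r) :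
    IsClassicalOn (fun r _ => u₀ r) T₀ where
  continuousOn := ContinuousOn.comp (f := Prod.fst)
    (fun r hr => (hu₀ r hr).1.continuousAt.continuousWithinAt) continuous_fst.continuousOn
    fun _ hp => hp.1
  differentiableAt_time _ _ _ _ := differentiableAt_const _
  differentiableAt_radial r hr _ _ := (hu₀ r hr).1
  differentiableAt_radial₂ r hr _ _ := (hu₀ r hr).2

theorem isMassSupersolution_stationary {d T₀ : ℝ} {M₀ W₀ : ℝ → ℝ}
    (hM₀ : ∀ r ∈ Ioi (0 : ℝ), DifferentiableAt ℝ M₀ r ∧ DifferentiableAt ℝ (deriv M₀) r)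
    (hW₀ : ∀ r ∈ Ioi (0 : ℝ), DifferentiableAt ℝ W₀ r ∧ DifferentiableAt ℝ (deriv W₀) r)
    (hM : ∀ r ∈ Ioi (0 : ℝ), deriv (deriv M₀) r + (d + 1) / r * deriv M₀ r
      + r * deriv M₀ r * W₀ r + d * M₀ r * W₀ r ≤ 0)
    (hW : ∀ r ∈ Ioi (0 : ℝ), deriv (deriv W₀) r + (d + 1) / r * deriv W₀ r + M₀ r ≤ 0) :
    IsMassSupersolution d (fun r _ => M₀ r) (fun r _ => W₀ r) T₀ where
  classicalM := isClassicalOn_stationary hM₀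
  classicalW := isClassicalOn_stationary hW₀
  rhsM_le r hr _ _ := (hM r hr).trans_eq (deriv_const _ _).symm
  rhsW_le r hr _ _ := (hW r hr).trans_eq (deriv_const _ _).symm

theorem MassReg.isClassicalOn_comp_add {f : ℝ → ℝ → ℝ} {T T₀ h : ℝ} (hf : MassReg f T)
    (hh : 0 ≤ h) (hT : T₀ + h < T) : IsClassicalOn (fun r t => f r (t + h)) T₀ where
  continuousOn :=
    hf.1.comp (continuous_fst.prodMk (continuous_snd.add continuous_const)).continuousOn
      fun _ ⟨hr, ht₀, ht⟩ => ⟨mem_Ici.2 (le_of_lt hr), add_nonneg ht₀ hh,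
        by simp only [Pi.add_apply]; linarith⟩
  differentiableAt_time r hr t ht :=
    (hf.2.1 r (le_of_lt hr) (t + h) ⟨by linarith [ht.1], by linarith [ht.2]⟩).comp t
      (differentiableAt_id.add_const h)
  differentiableAt_radial r hr t ht :=
    hf.2.2.1 r (le_of_lt hr) (t + h) ⟨by linarith [ht.1], by linarith [ht.2]⟩
  differentiableAt_radial₂ r hr t ht :=
    hf.2.2.2.2.2.1 r hr (t + h) ⟨by linarith [ht.1], by linarith [ht.2]⟩

theorem MassReg.isClassicalOn {f : ℝ → ℝ → ℝ} {T T₀ : ℝ} (hf : MassReg f T) (hT : T₀ < T) :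
    IsClassicalOn f T₀ := by
  simpa using hf.isClassicalOn_comp_add le_rfl (by simpa using hT)

theorem MassReg.continuousWithinAt_radial_zero {f : ℝ → ℝ → ℝ} {T t : ℝ} (hf : MassReg f T)
    (ht : t ∈ Ico 0 T) : ContinuousWithinAt (fun r => f r t) (Ioi 0) 0 :=
  ((hf.1.comp (continuous_id.prodMk continuous_const).continuousOn fun _ hr => ⟨hr, ht⟩) 0
    self_mem_Ici).mono Ioi_subset_Ici_self

theorem MassReg.exists_abs_le {f : ℝ → ℝ → ℝ} {T T₀ : ℝ} (hf : MassReg f T) (hT₀ : T₀ < T) :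
    ∃ C, 0 ≤ C ∧ ∀ r > 0, ∀ t ∈ Icc 0 T₀, |f r t| ≤ C := by
  obtain ⟨C, hC⟩ := hf.2.2.2.2.2.2.2 T₀ hT₀
  exact ⟨|C|, abs_nonneg C, fun r hr t ht => (hC r (le_of_lt hr) t ht).trans (le_abs_self C)⟩

theorem pderivT_comp_add (u : ℝ → ℝ → ℝ) (h r t : ℝ) :
    pderivT (fun r t => u r (t + h)) r t = pderivT u r (t + h) :=
  deriv_comp_add_const _ _ _

theorem antitoneOn_zero_of_forall_pos {f : ℝ → ℝ → ℝ} {s : Set ℝ}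
    (hf : ∀ r > 0, AntitoneOn (f r) s)
    (hc : ∀ t ∈ s, ContinuousWithinAt (fun r => f r t) (Ioi 0) 0) : AntitoneOn (f 0) s :=
  fun _ ht₁ _ ht₂ h => le_of_tendsto_of_tendsto (hc _ ht₂) (hc _ ht₁)
    (eventually_nhdsWithin_of_forall fun r hr => hf r hr ht₁ ht₂ h)

structure IsMassSolution (d T : ℝ) (M W : ℝ → ℝ → ℝ) : Prop where
  regM : MassReg M T
  regW : MassReg W T
  flux_nonneg : ∀ r ∈ Ioi (0 : ℝ), ∀ t ∈ Ioo (0 : ℝ) T, 0 ≤ r * pderivR M r t + d * M r t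
  flux_bdd : ∀ T₀ < T, ∃ Cb : ℝ, ∀ r ∈ Ioi (0 : ℝ), ∀ t ∈ Ioo (0 : ℝ) T₀,
    |r * pderivR M r t| ≤ Cb
  pdeM : ∀ r ∈ Ioi (0 : ℝ), ∀ t ∈ Ioo (0 : ℝ) T, pderivT M r t = massRhsM d M W r t
  pdeW : ∀ r ∈ Ioi (0 : ℝ), ∀ t ∈ Ioo (0 : ℝ) T, pderivT W r t = massRhsW d M W r t

namespace IsMassSolution

variable {d T : ℝ} {M W : ℝ → ℝ → ℝ}

theorem exists_bound (hs : IsMassSolution d T M W) (hd : 0 ≤ d) {T₀ : ℝ} (hT₀ : T₀ < T) :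
    ∃ K, 1 ≤ K ∧ (∀ r > 0, ∀ t ∈ Icc 0 T₀, |M r t| ≤ K ∧ d * |W r t| ≤ K) ∧
      ∀ r > 0, ∀ t ∈ Ioc 0 T₀, r * pderivR M r t + d * M r t ≤ K := by
  obtain ⟨CM, hCM₀, hCM⟩ := hs.regM.exists_abs_le hT₀
  obtain ⟨CW, hCW₀, hCW⟩ := hs.regW.exists_abs_le hT₀
  obtain ⟨CF, hCF⟩ := hs.flux_bdd ((T₀ + T) / 2) (by linarith)
  have hdCM := mul_nonneg hd hCM₀
  have hdCW := mul_nonneg hd hCW₀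
  refine ⟨1 + CM + d * CM + d * CW + |CF|, by linarith [abs_nonneg CF],
    fun r hr t ht => ⟨by linarith [hCM r hr t ht, abs_nonneg CF],
      by linarith [mul_le_mul_of_nonneg_left (hCW r hr t ht) hd, abs_nonneg CF]⟩,
    fun r hr t ht => ?_⟩
  have hflux := hCF r hr t ⟨ht.1, by linarith [ht.2]⟩
  have hM := mul_le_mul_of_nonneg_left (hCM r hr t (Ioc_subset_Icc_self ht)) hd
  linarith [le_abs_self (r * pderivR M r t), le_abs_self CF,
    mul_le_mul_of_nonneg_left (le_abs_self (M r t)) hd]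

theorem isMassSupersolution (hs : IsMassSolution d T M W) {T₀ : ℝ} (hT₀ : T₀ < T) :
    IsMassSupersolution d M W T₀ where
  classicalM := hs.regM.isClassicalOn hT₀
  classicalW := hs.regW.isClassicalOn hT₀
  rhsM_le r hr t ht := (hs.pdeM r hr t ⟨ht.1, ht.2.trans_lt hT₀⟩).ge
  rhsW_le r hr t ht := (hs.pdeW r hr t ⟨ht.1, ht.2.trans_lt hT₀⟩).ge

theorem isMassSubsolution_comp_add (hs : IsMassSolution d T M W) {h T₀ : ℝ} (hh : 0 ≤ h)
    (hT : T₀ + h < T) :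
    IsMassSubsolution d (fun r t => M r (t + h)) (fun r t => W r (t + h)) T₀ where
  classicalM := hs.regM.isClassicalOn_comp_add hh hT
  classicalW := hs.regW.isClassicalOn_comp_add hh hT
  le_rhsM r hr t ht := by
    rw [pderivT_comp_add]
    exact (hs.pdeM r hr (t + h) ⟨by linarith [ht.1], by linarith [ht.2]⟩).le
  le_rhsW r hr t ht := by
    rw [pderivT_comp_add]
    exact (hs.pdeW r hr (t + h) ⟨by linarith [ht.1], by linarith [ht.2]⟩).le

theorem comp_add_le (hs : IsMassSolution d T M W) (hd : 1 ≤ d) {h T₀ : ℝ} (hh : 0 ≤ h)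
    (hT : T₀ + h < T) {M₁ W₁ : ℝ → ℝ → ℝ} (hsup : IsMassSupersolution d M₁ W₁ T₀) {C : ℝ}
    (hC : ∀ r > 0, ∀ t ∈ Icc 0 T₀, |M₁ r t| ≤ C ∧ d * |W₁ r t| ≤ C)
    (h₀ : ∀ r > 0, M r h ≤ M₁ r 0 ∧ W r h ≤ W₁ r 0) :
    ∀ r > 0, ∀ t ∈ Icc 0 T₀, M r (t + h) ≤ M₁ r t ∧ W r (t + h) ≤ W₁ r t := by
  obtain ⟨K, hK, hMW, hflux⟩ := hs.exists_bound (by linarith) hT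
  have hK' : K ≤ max K C := le_max_left K C
  have hC' : C ≤ max K C := le_max_right K C
  refine (hs.isMassSubsolution_comp_add hh hT).le_of_isMassSupersolution (C := 2 * max K C) hd
    (hK.trans hK') hsup (fun r hr t ht => ?_) (fun r hr t ht => ?_)
    (fun r hr t ht => (hC r hr t (Ioc_subset_Icc_self ht)).2.trans hC')
    (fun r hr => by simpa using h₀ r hr)
  · obtain ⟨hM, hW⟩ := hMW r hr (t + h) ⟨by linarith [ht.1], by linarith [ht.2]⟩
    obtain ⟨hM₁, hW₁⟩ := hC r hr t ht
    have hW' := le_mul_of_one_le_left (abs_nonneg (W r (t + h))) hd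
    have hW₁' := le_mul_of_one_le_left (abs_nonneg (W₁ r t)) hd
    constructor <;> linarith [le_abs_self (M r (t + h)), neg_abs_le (M₁ r t),
      le_abs_self (W r (t + h)), neg_abs_le (W₁ r t)]
  · have hth : t + h ∈ Ioo 0 T := ⟨by linarith [ht.1], by linarith [ht.2]⟩
    exact ⟨hs.flux_nonneg r hr (t + h) hth,
      (hflux r hr (t + h) ⟨by linarith [ht.1], by linarith [ht.2]⟩).trans hK'⟩

theorem le_initial (hs : IsMassSolution d T M W) (hd : 1 ≤ d)
    (hM₀ : ∀ r ∈ Ioi (0 : ℝ), DifferentiableAt ℝ (fun ρ => M ρ 0) r ∧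
      DifferentiableAt ℝ (deriv (fun ρ => M ρ 0)) r)
    (hW₀ : ∀ r ∈ Ioi (0 : ℝ), DifferentiableAt ℝ (fun ρ => W ρ 0) r ∧
      DifferentiableAt ℝ (deriv (fun ρ => W ρ 0)) r)
    (hM : ∀ r ∈ Ioi (0 : ℝ), deriv (deriv (fun ρ => M ρ 0)) r
      + (d + 1) / r * deriv (fun ρ => M ρ 0) r + r * deriv (fun ρ => M ρ 0) r * W r 0
      + d * M r 0 * W r 0 ≤ 0)
    (hW : ∀ r ∈ Ioi (0 : ℝ), deriv (deriv (fun ρ => W ρ 0)) r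
      + (d + 1) / r * deriv (fun ρ => W ρ 0) r + M r 0 ≤ 0) :
    ∀ r > 0, ∀ t ∈ Ico 0 T, M r t ≤ M r 0 ∧ W r t ≤ W r 0 := by
  intro r hr t ht
  obtain ⟨K, -, hMW, -⟩ := hs.exists_bound (by linarith) ht.2
  simpa using hs.comp_add_le hd le_rfl (by simpa using ht.2)
    (isMassSupersolution_stationary hM₀ hW₀ hM hW) (fun r hr _ _ => hMW r hr 0 ⟨le_rfl, ht.1⟩)
    (fun _ _ => ⟨le_rfl, le_rfl⟩) r hr t ⟨ht.1, le_rfl⟩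

theorem antitoneOn (hs : IsMassSolution d T M W) (hd : 1 ≤ d)
    (hle : ∀ r > 0, ∀ t ∈ Ico 0 T, M r t ≤ M r 0 ∧ W r t ≤ W r 0) :
    ∀ r ∈ Ici (0 : ℝ), AntitoneOn (fun t => M r t) (Ico 0 T) ∧
      AntitoneOn (fun t => W r t) (Ico 0 T) := by
  have hpos : ∀ r > 0, ∀ t₁ ∈ Ico 0 T, ∀ t₂ ∈ Ico 0 T, t₁ ≤ t₂ →
      M r t₂ ≤ M r t₁ ∧ W r t₂ ≤ W r t₁ := by
    intro r hr t₁ ht₁ t₂ ht₂ h₁₂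
    obtain ⟨K, -, hMW, -⟩ := hs.exists_bound (by linarith) ht₁.2
    simpa using hs.comp_add_le hd (sub_nonneg.2 h₁₂) (by linarith [ht₂.2])
      (hs.isMassSupersolution ht₁.2) hMW
      (fun r hr => hle r hr (t₂ - t₁) ⟨sub_nonneg.2 h₁₂, by linarith [ht₁.1, ht₂.2]⟩)
      r hr t₁ ⟨ht₁.1, le_rfl⟩
  intro r hr
  rcases (mem_Ici.1 hr).eq_or_lt with rfl | hr
  · exact ⟨antitoneOn_zero_of_forall_pos (fun r hr _ ht₁ _ ht₂ h => (hpos r hr _ ht₁ _ ht₂ h).1)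
      fun _ ht => hs.regM.continuousWithinAt_radial_zero ht,
      antitoneOn_zero_of_forall_pos (fun r hr _ ht₁ _ ht₂ h => (hpos r hr _ ht₁ _ ht₂ h).2)
      fun _ ht => hs.regW.continuousWithinAt_radial_zero ht⟩
  · exact ⟨fun _ ht₁ _ ht₂ h => (hpos r hr _ ht₁ _ ht₂ h).1,
      fun _ ht₁ _ ht₂ h => (hpos r hr _ ht₁ _ ht₂ h).2⟩

end IsMassSolution

theorem stmt9_general (d : ℕ) (hd : 5 ≤ d) (T : ℝ)
    (M W : ℝ → ℝ → ℝ)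
    (hM : MassReg M T) (hW : MassReg W T)
    (hflux : ∀ r ∈ Set.Ioi (0 : ℝ), ∀ t ∈ Set.Ioo (0 : ℝ) T,
      0 ≤ r * pderivR M r t + (d : ℝ) * M r t)
    (hflux_bdd : ∀ T₀ < T, ∃ Cb : ℝ, ∀ r ∈ Set.Ioi (0 : ℝ), ∀ t ∈ Set.Ioo (0 : ℝ) T₀,
      |r * pderivR M r t| ≤ Cb)
    (hpde1 : ∀ r ∈ Set.Ioi (0 : ℝ), ∀ t ∈ Set.Ioo (0 : ℝ) T,
      pderivT M r t = pderivRR M r t + ((d : ℝ) + 1) / r * pderivR M r t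
        + r * pderivR M r t * W r t + (d : ℝ) * M r t * W r t)
    (hpde2 : ∀ r ∈ Set.Ioi (0 : ℝ), ∀ t ∈ Set.Ioo (0 : ℝ) T,
      pderivT W r t = pderivRR W r t + ((d : ℝ) + 1) / r * pderivR W r t + M r t)
    (hM0_diff : ∀ r ∈ Set.Ioi (0 : ℝ), DifferentiableAt ℝ (fun ρ => M ρ 0) r ∧
      DifferentiableAt ℝ (deriv (fun ρ => M ρ 0)) r)
    (hW0_diff : ∀ r ∈ Set.Ioi (0 : ℝ), DifferentiableAt ℝ (fun ρ => W ρ 0) r ∧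
      DifferentiableAt ℝ (deriv (fun ρ => W ρ 0)) r)
    (hinit1 : ∀ r ∈ Set.Ioi (0 : ℝ),
      deriv (deriv (fun ρ => M ρ 0)) r + ((d : ℝ) + 1) / r * deriv (fun ρ => M ρ 0) r
        + r * deriv (fun ρ => M ρ 0) r * W r 0 + (d : ℝ) * M r 0 * W r 0 ≤ 0)
    (hinit2 : ∀ r ∈ Set.Ioi (0 : ℝ),
      deriv (deriv (fun ρ => W ρ 0)) r + ((d : ℝ) + 1) / r * deriv (fun ρ => W ρ 0) r
        + M r 0 ≤ 0) :
    ∀ r ∈ Set.Ici (0 : ℝ),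
      AntitoneOn (fun t => M r t) (Set.Ico 0 T) ∧ AntitoneOn (fun t => W r t) (Set.Ico 0 T) := by
  have hd₁ : (1 : ℝ) ≤ d := by exact_mod_cast (by omega : 1 ≤ d)
  have hs : IsMassSolution d T M W := ⟨hM, hW, hflux, hflux_bdd, hpde1, hpde2⟩
  exact hs.antitoneOn hd₁ (hs.le_initial hd₁ hM0_diff hW0_diff hinit1 hinit2)

/-- Time monotonicity of the mass functions when the initial data is a
time-independent supersolution of the mass-function system. -/
theorem stmt9 (d : ℕ) (hd : 5 ≤ d) (T : ℝ) (hT : 0 < T)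
    (M W : ℝ → ℝ → ℝ)
    (hM : MassReg M T) (hW : MassReg W T)
    (hflux : ∀ r ∈ Set.Ioi (0 : ℝ), ∀ t ∈ Set.Ioo (0 : ℝ) T,
      0 ≤ r * pderivR M r t + (d : ℝ) * M r t)
    (hflux_bdd : ∀ T₀ < T, ∃ Cb : ℝ, ∀ r ∈ Set.Ioi (0 : ℝ), ∀ t ∈ Set.Ioo (0 : ℝ) T₀,
      |r * pderivR M r t| ≤ Cb)
    (hpde1 : ∀ r ∈ Set.Ioi (0 : ℝ), ∀ t ∈ Set.Ioo (0 : ℝ) T,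
      pderivT M r t = pderivRR M r t + ((d : ℝ) + 1) / r * pderivR M r t
        + r * pderivR M r t * W r t + (d : ℝ) * M r t * W r t)
    (hpde2 : ∀ r ∈ Set.Ioi (0 : ℝ), ∀ t ∈ Set.Ioo (0 : ℝ) T,
      pderivT W r t = pderivRR W r t + ((d : ℝ) + 1) / r * pderivR W r t + M r t)
    (hM0_diff : ∀ r ∈ Set.Ioi (0 : ℝ), DifferentiableAt ℝ (fun ρ => M ρ 0) r ∧
      DifferentiableAt ℝ (deriv (fun ρ => M ρ 0)) r)
    (hM0_cont : ContinuousOn (deriv (deriv (fun ρ => M ρ 0))) (Set.Ioi 0))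
    (hW0_diff : ∀ r ∈ Set.Ioi (0 : ℝ), DifferentiableAt ℝ (fun ρ => W ρ 0) r ∧
      DifferentiableAt ℝ (deriv (fun ρ => W ρ 0)) r)
    (hW0_cont : ContinuousOn (deriv (deriv (fun ρ => W ρ 0))) (Set.Ioi 0))
    (hinit1 : ∀ r ∈ Set.Ioi (0 : ℝ),
      deriv (deriv (fun ρ => M ρ 0)) r + ((d : ℝ) + 1) / r * deriv (fun ρ => M ρ 0) r
        + r * deriv (fun ρ => M ρ 0) r * W r 0 + (d : ℝ) * M r 0 * W r 0 ≤ 0)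
    (hinit2 : ∀ r ∈ Set.Ioi (0 : ℝ),
      deriv (deriv (fun ρ => W ρ 0)) r + ((d : ℝ) + 1) / r * deriv (fun ρ => W ρ 0) r
        + M r 0 ≤ 0) :
    ∀ r ∈ Set.Ici (0 : ℝ),
      AntitoneOn (fun t => M r t) (Set.Ico 0 T) ∧ AntitoneOn (fun t => W r t) (Set.Ico 0 T) :=
  stmt9_general d hd T M W hM hW hflux hflux_bdd hpde1 hpde2 hM0_diff hW0_diff hinit1 hinit2
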